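/- arXiv:2209.02104 — 6 statements merged into one kernel-verified Lean document; each statement's English description precedes it below -/
import Mathlib

section
/- Let p be a prime and let γ be a function on positive integers satisfying: γ(n) divides n, γ(γ(n)) = γ(n), if m divides n and γ(n) = n then γ(m) = m, and γ(mn) = γ(m)γ(n) whenever gcd(m,n) = 1. If γ(p) < p, then γ(p^a) < p for every positive integer a. -/
/-- If `γ` satisfies the cyclic-partition-cardinality axioms and
`γ p < p` for a prime `p`, then `γ (p ^ a) < p` for every positive `a`. -/
theorem stmt_0 (γ : ℕ → ℕ)
    (h1 : ∀ n : ℕ, γ n ∣ n)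
    (h2 : ∀ n : ℕ, γ (γ n) = γ n)
    (h3 : ∀ m n : ℕ, m ∣ n → γ n = n → γ m = m)
    (h4 : ∀ m n : ℕ, Nat.gcd m n = 1 → γ (m * n) = γ m * γ n)
    (p : ℕ) (hp : p.Prime) (hγp : γ p < p) :
    ∀ a : ℕ, 0 < a → γ (p ^ a) < p := by
  intro a _
  obtain ⟨k, hk, hEq⟩ := (Nat.dvd_prime_pow hp).mp (h1 (p ^ a))
  rcases Nat.eq_zero_or_pos k with h0 | hkpos
  · simp [hEq, h0, hp.one_lt]
  · exfalso
    have hfix : γ (p ^ k) = p ^ k := by rw [← hEq, h2]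
    have hdvd : p ∣ p ^ k := dvd_pow_self p hkpos.ne'
    have := h3 p (p ^ k) hdvd hfix
    omega
end

section
/- Let p be a prime and γ: ℕ → ℕ satisfy: γ(n) divides n, γ(γ(n)) = γ(n), if m divides n and γ(n) = n then γ(m) = m, and γ(mn) = γ(m)γ(n) whenever gcd(m,n) = 1. Suppose γ(p) < p and (p_n) is a sequence of positive integers whose p-adic valuations tend to infinity. Then γ(p_n)/p_n → 0. -/
open Filter

/-!
Since `γ p` divides `p` and is smaller, `γ p = 1`; then `γ (p ^ k) = 1` for all `k`, because a
nontrivial `γ (p ^ k) = p ^ j` is a fixed point divisible by `p`, forcing `γ p = p`. Writing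
`n = p ^ k * s` with `p ∤ s`, multiplicativity gives `γ n = γ s ≤ s = n / p ^ k`, so
`γ n / n ≤ p ^ (-k)`, which tends to `0` as `k = ν_p n → ∞`.
-/

section

variable {γ : ℕ → ℕ} {p : ℕ}

lemma eq_one_of_dvd_prime_of_lt (hp : p.Prime) (hdvd : γ p ∣ p) (hlt : γ p < p) : γ p = 1 :=
  (hp.eq_one_or_self_of_dvd _ hdvd).resolve_right hlt.ne

lemma apply_prime_pow_eq_one (h1 : ∀ n, γ n ∣ n) (h2 : ∀ n, γ (γ n) = γ n)
    (h3 : ∀ m n, m ∣ n → γ n = n → γ m = m) (hp : p.Prime) (hγp : γ p = 1) (k : ℕ) :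
    γ (p ^ k) = 1 := by
  obtain ⟨j, -, hj⟩ := (Nat.dvd_prime_pow hp).mp (h1 (p ^ k))
  rcases j.eq_zero_or_pos with rfl | hj0
  · simpa using hj
  · have hfix : γ p = p := h3 p _ (hj ▸ dvd_pow_self p hj0.ne') (h2 _)
    exact absurd (hγp ▸ hfix) hp.one_lt.ne

lemma apply_eq_apply_ordCompl (h4 : ∀ m n, Nat.gcd m n = 1 → γ (m * n) = γ m * γ n)
    (hp : p.Prime) (hpow : ∀ k, γ (p ^ k) = 1) {n : ℕ} (hn : n ≠ 0) :
    γ n = γ (n / p ^ n.factorization p) := by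
  conv_lhs => rw [← Nat.ordProj_mul_ordCompl_eq_self n p]
  rw [h4 _ _ ((Nat.coprime_ordCompl hp hn).pow_left _), hpow, one_mul]

lemma apply_mul_ordProj_le (h1 : ∀ n, γ n ∣ n)
    (h4 : ∀ m n, Nat.gcd m n = 1 → γ (m * n) = γ m * γ n)
    (hp : p.Prime) (hpow : ∀ k, γ (p ^ k) = 1) {n : ℕ} (hn : n ≠ 0) :
    γ n * p ^ n.factorization p ≤ n := by
  rw [apply_eq_apply_ordCompl h4 hp hpow hn]
  calc γ (n / p ^ n.factorization p) * p ^ n.factorization p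
      ≤ n / p ^ n.factorization p * p ^ n.factorization p :=
        Nat.mul_le_mul_right _ (Nat.le_of_dvd (Nat.ordCompl_pos p hn) (h1 _))
    _ = n := Nat.div_mul_cancel (Nat.ordProj_dvd n p)

lemma apply_div_le_inv_ordProj (h1 : ∀ n, γ n ∣ n)
    (h4 : ∀ m n, Nat.gcd m n = 1 → γ (m * n) = γ m * γ n)
    (hp : p.Prime) (hpow : ∀ k, γ (p ^ k) = 1) {n : ℕ} (hn : n ≠ 0) :
    (γ n : ℝ) / n ≤ ((p : ℝ) ^ n.factorization p)⁻¹ := by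
  have hpk : (0 : ℝ) < (p : ℝ) ^ n.factorization p := pow_pos (by exact_mod_cast hp.pos) _
  rw [div_le_iff₀ (by positivity), inv_mul_eq_div, le_div_iff₀ hpk]
  exact_mod_cast apply_mul_ordProj_le h1 h4 hp hpow hn

end

theorem stmt_1_general (γ : ℕ → ℕ)
    (h1 : ∀ n : ℕ, γ n ∣ n)
    (h2 : ∀ n : ℕ, γ (γ n) = γ n)
    (h3 : ∀ m n : ℕ, m ∣ n → γ n = n → γ m = m)
    (h4 : ∀ m n : ℕ, Nat.gcd m n = 1 → γ (m * n) = γ m * γ n)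
    (p : ℕ) (hp : p.Prime) (hγp : γ p < p)
    (P : ℕ → ℕ) (hP : ∀ n, 0 < P n)
    (hval : Tendsto (fun n => (P n).factorization p) atTop atTop) :
    Tendsto (fun n => (γ (P n) : ℝ) / (P n : ℝ)) atTop (nhds 0) := by
  have hpow : ∀ k, γ (p ^ k) = 1 :=
    apply_prime_pow_eq_one h1 h2 h3 hp (eq_one_of_dvd_prime_of_lt hp (h1 p) hγp)
  have hinv : Tendsto (fun n => ((p : ℝ) ^ (P n).factorization p)⁻¹) atTop (nhds 0) :=
    tendsto_inv_atTop_zero.comp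
      ((tendsto_pow_atTop_atTop_of_one_lt (by exact_mod_cast hp.one_lt)).comp hval)
  exact squeeze_zero (fun n => by positivity)
    (fun n => apply_div_le_inv_ordProj h1 h4 hp hpow (hP n).ne') hinv

/-- Under the axioms for `γ`, if `γ p < p` for a prime `p` and
`(P n)` is a sequence of positive integers whose `p`-adic valuations tend to
infinity, then `γ (P n) / P n → 0`. -/
theorem stmt_1 (γ : ℕ → ℕ)
    (h0 : ∀ n : ℕ, 0 < n → 1 ≤ γ n ∧ γ n ≤ n)
    (h1 : ∀ n : ℕ, γ n ∣ n)
    (h2 : ∀ n : ℕ, γ (γ n) = γ n)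
    (h3 : ∀ m n : ℕ, m ∣ n → γ n = n → γ m = m)
    (h4 : ∀ m n : ℕ, Nat.gcd m n = 1 → γ (m * n) = γ m * γ n)
    (p : ℕ) (hp : p.Prime) (hγp : γ p < p)
    (P : ℕ → ℕ) (hP : ∀ n, 0 < P n)
    (hval : Tendsto (fun n => (P n).factorization p) atTop atTop) :
    Tendsto (fun n => (γ (P n) : ℝ) / (P n : ℝ)) atTop (nhds 0) :=
  stmt_1_general γ h1 h2 h3 h4 p hp hγp P hP hval
end

section
/- Let G and Z be compact topological abelian groups, β ∈ Z and α ∈ G elements generating dense cyclic subgroups, and let π: Z → G be a continuous surjection satisfying π(g + β) = π(g) + α for all g ∈ Z. Then the map f(z) := π(z) − π(0) is a continuous group homomorphism from Z to G. -/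
/-!
Iterating the equivariance gives `π (z + n • β) = π z + n • α` for every `n : ℤ`, so the two
continuous maps `w ↦ π (z + w)` and `w ↦ π z + π w - π 0` agree on the dense orbit of `β`,
hence everywhere.
-/

theorem map_add_zsmul_of_map_add {Z G : Type*} [AddGroup Z] [AddGroup G] {β : Z} {α : G}
    {π : Z → G} (hequi : ∀ g, π (g + β) = π g + α) (g : Z) (n : ℤ) :
    π (g + n • β) = π g + n • α := by
  have hnat : ∀ (g : Z) (n : ℕ), π (g + (n : ℤ) • β) = π g + (n : ℤ) • α := by
    intro g n
    induction n with
    | zero => simp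
    | succ k ih => rw [Nat.cast_succ, add_zsmul, one_zsmul, ← add_assoc, hequi, ih,
        add_zsmul, one_zsmul, add_assoc]
  obtain ⟨n, rfl | rfl⟩ := Int.eq_nat_or_neg n
  · exact hnat g n
  · have h := hnat (g + (-(n : ℤ)) • β) n
    rw [neg_zsmul, neg_add_cancel_right, ← sub_eq_add_neg] at h
    rw [neg_zsmul, neg_zsmul, ← sub_eq_add_neg, ← sub_eq_add_neg, h, add_sub_cancel_right]

theorem map_add_eq_of_dense_zsmul {Z G : Type*} [AddCommGroup Z] [TopologicalSpace Z]
    [ContinuousAdd Z] [AddCommGroup G] [TopologicalSpace G] [IsTopologicalAddGroup G]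
    [T2Space G] {β : Z} {α : G} (hβ : Dense (Set.range fun n : ℤ => n • β)) {π : Z → G}
    (hcont : Continuous π) (hequi : ∀ g, π (g + β) = π g + α) (z w : Z) :
    π (z + w) = π z + π w - π 0 := by
  suffices h : (fun w => π (z + w)) = fun w => π z + π w - π 0 from congrFun h w
  refine Continuous.ext_on hβ (by fun_prop) (by fun_prop) ?_
  rintro _ ⟨n, rfl⟩
  have h0 := map_add_zsmul_of_map_add hequi 0 n
  rw [zero_add] at h0
  simp only [map_add_zsmul_of_map_add hequi z n, h0]
  abel

theorem stmt_2_general {Z G : Type} [AddCommGroup Z] [TopologicalSpace Z]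
    [IsTopologicalAddGroup Z]
    [AddCommGroup G] [TopologicalSpace G] [IsTopologicalAddGroup G]
    [T2Space G]
    (β : Z) (hβ : Dense (Set.range fun n : ℤ => n • β))
    (α : G)
    (π : Z → G) (hcont : Continuous π)
    (hequi : ∀ g : Z, π (g + β) = π g + α) :
    Continuous (fun z : Z => π z - π 0) ∧
      ∀ z w : Z, π (z + w) - π 0 = (π z - π 0) + (π w - π 0) := by
  refine ⟨hcont.sub continuous_const, fun z w => ?_⟩
  rw [map_add_eq_of_dense_zsmul hβ hcont hequi]
  abel

/-- If `Z`, `G` are compact abelian topological groups with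
topological generators `β`, `α`, and `π : Z → G` is a continuous surjection
with `π (g + β) = π g + α`, then `f z = π z - π 0` is a continuous group
homomorphism. -/
theorem stmt_2 {Z G : Type} [AddCommGroup Z] [TopologicalSpace Z]
    [IsTopologicalAddGroup Z] [CompactSpace Z] [T2Space Z]
    [AddCommGroup G] [TopologicalSpace G] [IsTopologicalAddGroup G]
    [CompactSpace G] [T2Space G]
    (β : Z) (hβ : Dense (Set.range fun n : ℤ => n • β))
    (α : G) (hα : Dense (Set.range fun n : ℤ => n • α))
    (π : Z → G) (hcont : Continuous π) (hsurj : Function.Surjective π)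
    (hequi : ∀ g : Z, π (g + β) = π g + α) :
    Continuous (fun z : Z => π z - π 0) ∧
      ∀ z w : Z, π (z + w) - π 0 = (π z - π 0) + (π w - π 0) :=
  stmt_2_general β hβ α π hcont hequi
end

section
/- Let (q_n)_{n≥0} be a sequence of integers with q_n ≥ 2, set p_n = q_0 q_1 ⋯ q_{n−1}, and let h ≥ 1 be an integer coprime to every p_n. If λ ∈ S¹ is such that the limit lim_{n→∞} λ^{p_{n+1}} exists and λ = e^{2πi/h}, then h divides q_n − 1 for all sufficiently large n. -/
open Filter Topology

/- Powers of `λ = e^{2πi/h}` take only finitely many values, so the convergent sequence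
`λ ^ p n` is eventually constant. Then `λ ^ (p n * q n) = λ ^ p n`, i.e.
`p n * q n ≡ p n [MOD h]`, and cancelling `p n`, which is coprime to `h`, gives
`q n ≡ 1 [MOD h]`. -/

theorem Filter.Tendsto.eventually_eq_of_mem_finite {α X : Type*} [TopologicalSpace X]
    [T1Space X] {l : Filter α} {f : α → X} {s : Set X} {x : X} (hs : s.Finite)
    (hfs : ∀ a, f a ∈ s) (hf : Tendsto f l (𝓝 x)) : ∀ᶠ a in l, f a = x := by
  have hx : x ∈ (s \ {x})ᶜ := fun hx ↦ hx.2 rfl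
  filter_upwards [hf.eventually (hs.sdiff.isClosed.isOpen_compl.mem_nhds hx)] with a ha
  by_contra hne
  exact ha ⟨hfs a, hne⟩

theorem IsOfFinOrder.eventually_pow_eq_of_tendsto {α M : Type*} [Monoid M]
    [TopologicalSpace M] [T1Space M] {l : Filter α} {x L : M} (hx : IsOfFinOrder x)
    {k : α → ℕ} (hk : Tendsto (fun a ↦ x ^ k a) l (𝓝 L)) : ∀ᶠ a in l, x ^ k a = L :=
  hk.eventually_eq_of_mem_finite hx.finite_powers fun a ↦ ⟨k a, rfl⟩

theorem IsOfFinOrder.eventually_modEq_one_of_tendsto_pow_prod {M : Type*} [Monoid M]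
    [TopologicalSpace M] [T1Space M] {x L : M} (hx : IsOfFinOrder x) {p q : ℕ → ℕ}
    (hps : ∀ n, p (n + 1) = p n * q n) (hcop : ∀ n, (orderOf x).Coprime (p n))
    (hlim : Tendsto (fun n ↦ x ^ p (n + 1)) atTop (𝓝 L)) :
    ∀ᶠ n in atTop, q n ≡ 1 [MOD orderOf x] := by
  have hconst : ∀ᶠ n in atTop, x ^ p n = L :=
    hx.eventually_pow_eq_of_tendsto ((tendsto_add_atTop_iff_nat 1).mp hlim)
  filter_upwards [hconst, tendsto_add_atTop_nat 1 |>.eventually hconst] with n hn hn1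
  have hpow : x ^ (p n * q n) = x ^ (p n * 1) := by rw [← hps, hn1, mul_one, hn]
  exact (hx.pow_eq_pow_iff_modEq.mp hpow).cancel_left_of_coprime (hcop n)

theorem stmt_5_general (q : ℕ → ℕ) (hq : ∀ n, 2 ≤ q n)
    (p : ℕ → ℕ) (hps : ∀ n, p (n + 1) = p n * q n)
    (h : ℕ) (hh : 1 ≤ h) (hcop : ∀ n, Nat.Coprime h (p n))
    (lam : ℂ) (hlam : lam = Complex.exp (2 * Real.pi * Complex.I / h))
    (L : ℂ) (hlim : Tendsto (fun n => lam ^ p (n + 1)) atTop (nhds L)) :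
    ∀ᶠ n in atTop, h ∣ (q n - 1) := by
  have hroot : IsPrimitiveRoot lam h := hlam ▸ Complex.isPrimitiveRoot_exp h (by omega)
  have horder : orderOf lam = h := hroot.eq_orderOf.symm
  have hmod := (hroot.isOfFinOrder (by omega)).eventually_modEq_one_of_tendsto_pow_prod hps
    (horder ▸ hcop) hlim
  filter_upwards [hmod] with n hn
  exact (Nat.modEq_iff_dvd' (by linarith [hq n])).mp (horder ▸ hn.symm)

/-- If `q n ≥ 2`, `p n = q 0 ⋯ q (n-1)`, `h ≥ 1` is coprime to
every `p n`, `λ = e^{2πi/h}`, and `λ ^ p (n+1)` converges, then `h ∣ q n - 1`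
for all large `n`. -/
theorem stmt_5 (q : ℕ → ℕ) (hq : ∀ n, 2 ≤ q n)
    (p : ℕ → ℕ) (hp0 : p 0 = 1) (hps : ∀ n, p (n + 1) = p n * q n)
    (h : ℕ) (hh : 1 ≤ h) (hcop : ∀ n, Nat.Coprime h (p n))
    (lam : ℂ) (hlam : lam = Complex.exp (2 * Real.pi * Complex.I / h))
    (L : ℂ) (hlim : Tendsto (fun n => lam ^ p (n + 1)) atTop (nhds L)) :
    ∀ᶠ n in atTop, h ∣ (q n - 1) :=
  stmt_5_general q hq p hps h hh hcop lam hlam L hlim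
end

section
/- Let (X, σ) be a minimal topological dynamical system on a compact metric space, and suppose there is a factor map π from (X, σ) onto a minimal rotation (G, +α) on a compact monothetic metrizable group G, such that some fibre of π is finite of cardinality c. Then the maximal equicontinuous factor of (X, σ) is a group rotation on a group Z that admits a continuous surjective homomorphism onto G with finite kernel of order at most c. -/
/-- A factor of the dynamical system `(X, σ)` which is a minimal rotation on a
compact metrizable monothetic abelian group. -/
structure GroupRotationFactor (X : Type) [TopologicalSpace X] (σ : X → X) where
  Z : Type
  [grp : AddCommGroup Z]
  [top : TopologicalSpace Z]
  [tgrp : IsTopologicalAddGroup Z]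
  [cpt : CompactSpace Z]
  [t2 : T2Space Z]
  [met : TopologicalSpace.MetrizableSpace Z]
  β : Z
  dense_gen : Dense (Set.range fun n : ℤ => n • β)
  factor : X → Z
  cont : Continuous factor
  surj : Function.Surjective factor
  equivar : ∀ x, factor (σ x) = factor x + β

attribute [instance] GroupRotationFactor.grp GroupRotationFactor.top
  GroupRotationFactor.tgrp GroupRotationFactor.cpt GroupRotationFactor.t2
  GroupRotationFactor.met

/-!
Choose `x₀` over `g`. In the product of all group rotation factors of `(X, σ)`, the orbit
closure of `x₀` (translated to `0`) is the closed subgroup generated by the product rotation; it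
is a group rotation factor through which every other one factors, i.e. the maximal equicontinuous
factor `Z`. The induced map `ψ : Z → G` intertwines the two rotations, hence is affine by density
of the orbit of `0`, so `ψ - ψ 0` is a continuous surjective homomorphism. Since `x₀` lies over
`0 ∈ Z` and over `g ∈ G`, its kernel is the image of the fibre `π⁻¹(g)`, which has at most `c`
points.
-/

open Set Function Topology TopologicalSpace

theorem Continuous.secondCountableTopology_of_surjective {X Y : Type*} [TopologicalSpace X]
    [TopologicalSpace Y] [CompactSpace X] [SecondCountableTopology X] [T2Space Y] {f : X → Y}
    (hf : Continuous f) (hsurj : Surjective f) : SecondCountableTopology Y := by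
  obtain ⟨b, hbc, -, hb⟩ := exists_countable_basis X
  -- `kernImage f U = {y | f ⁻¹' {y} ⊆ U}` is open since `f` is a closed map, and by compactness of
  -- the fibres these sets, for `U` a finite union of basic open sets, form a basis of `Y`.
  refine (isTopologicalBasis_of_isOpen_of_nhds (s := (kernImage f ∘ sUnion) ''
      {t | t.Finite ∧ t ⊆ b}) ?_ ?_).secondCountableTopology
    ((countable_ofPred_finite_subset hbc).image _)
  · rintro - ⟨t, ⟨-, htb⟩, rfl⟩
    exact isClosedMap_iff_kernImage.mp hf.isClosedMap
      (isOpen_sUnion fun u hu => hb.isOpen (htb hu))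
  · intro y W hyW hW
    have hcover : f ⁻¹' {y} ⊆ ⋃ u ∈ {u | u ∈ b ∧ u ⊆ f ⁻¹' W}, u := fun x hx =>
      let ⟨u, hub, hxu, huW⟩ := hb.exists_subset_of_mem_open
        (by rwa [mem_preimage, mem_singleton_iff.mp hx]) (hW.preimage hf)
      mem_biUnion ⟨hub, huW⟩ hxu
    obtain ⟨t, htb, htf, hyt⟩ :=
      (isClosed_singleton.preimage hf).isCompact.elim_finite_subcover_image
        (fun u hu => hb.isOpen hu.1) hcover
    refine ⟨_, ⟨t, ⟨htf, fun u hu => (htb hu).1⟩, rfl⟩, ?_, ?_⟩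
    · intro x hx
      simpa [sUnion_eq_biUnion] using hyt hx
    · intro y' hy'
      obtain ⟨x, rfl⟩ := hsurj y'
      obtain ⟨u, hut, hxu⟩ := hy' rfl
      exact (htb hut).2 hxu

theorem map_zpow_apply_eq_add_zsmul {X A : Type*} [AddGroup A] {σ : Equiv.Perm X} {f : X → A}
    {β : A} (hf : ∀ x, f (σ x) = f x + β) (n : ℤ) (x : X) : f ((σ ^ n) x) = f x + n • β := by
  induction n using Int.induction_on with
  | zero => simp
  | succ n ih =>
    rw [add_comm (n : ℤ), zpow_one_add, Equiv.Perm.mul_apply, hf, ih, add_comm 1, add_one_zsmul,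
      add_assoc]
  | pred n ih =>
    have h := hf ((σ ^ (-(n : ℤ) - 1)) x)
    rw [← Equiv.Perm.mul_apply, ← zpow_one_add, add_sub_cancel, ih] at h
    rw [sub_one_zsmul, eq_sub_of_add_eq h.symm, add_sub_assoc, sub_eq_add_neg]

theorem exists_addMonoidHom_sub_of_map_add {Z W : Type*} [AddCommGroup Z] [TopologicalSpace Z]
    [ContinuousAdd Z] [AddCommGroup W] [TopologicalSpace W] [IsTopologicalAddGroup W]
    [T2Space W] {β : Z} {γ : W} (hβ : Dense (range fun n : ℤ => n • β)) {ψ : Z → W}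
    (hψ : Continuous ψ) (h : ∀ z, ψ (z + β) = ψ z + γ) :
    ∃ φ : Z →+ W, Continuous φ ∧ ∀ z, φ z = ψ z - ψ 0 := by
  have hzsmul (n : ℤ) (z : Z) : ψ (z + n • β) = ψ z + n • γ := by
    simpa using map_zpow_apply_eq_add_zsmul (σ := Equiv.addRight β) h n z
  have hadd (a b : Z) : ψ (a + b) = ψ a + ψ b - ψ 0 := by
    have : (fun b => ψ (a + b)) = fun b => ψ a + ψ b - ψ 0 :=
      Continuous.ext_on hβ (by fun_prop) (by fun_prop) (by
        rintro - ⟨n, rfl⟩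
        simp only
        rw [hzsmul, ← zero_add (n • β), hzsmul]
        abel)
    exact congrFun this b
  exact ⟨AddMonoidHom.mk' (fun z => ψ z - ψ 0) fun a b => by rw [hadd]; abel,
    hψ.sub continuous_const, fun _ => rfl⟩

namespace GroupRotationFactor

variable {X : Type} [TopologicalSpace X] {σ : X ≃ₜ X}

def IsMaximal (M : GroupRotationFactor X σ) : Prop :=
  ∀ F : GroupRotationFactor X σ, ∃ ψ : M.Z → F.Z, Continuous ψ ∧ ∀ x, ψ (M.factor x) = F.factor x

theorem exists_addMonoidHom_eq_sub_of_comp_factor {M F : GroupRotationFactor X σ} {ψ : M.Z → F.Z}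
    (hψc : Continuous ψ) (hψ : ∀ x, ψ (M.factor x) = F.factor x) :
    ∃ φ : M.Z →+ F.Z, Continuous φ ∧ ∀ z, φ z = ψ z - ψ 0 := by
  refine exists_addMonoidHom_sub_of_map_add (γ := F.β) M.dense_gen hψc fun z => ?_
  obtain ⟨x, rfl⟩ := M.surj z
  rw [← M.equivar, hψ, hψ, F.equivar]

variable [CompactSpace X] [SecondCountableTopology X] {x₀ : X}

theorem exists_factor_orbitClosure {P : Type} [AddCommGroup P] [TopologicalSpace P]
    [IsTopologicalAddGroup P] [CompactSpace P] [T2Space P] {f : X → P} {β : P}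
    (hx₀ : Dense (range fun n : ℤ => (σ.toEquiv ^ n) x₀)) (hf : Continuous f)
    (hfσ : ∀ x, f (σ x) = f x + β) (hf₀ : f x₀ = 0) :
    ∃ M : GroupRotationFactor X σ, M.factor x₀ = 0 ∧
      ∃ ι : M.Z → P, Continuous ι ∧ ∀ x, ι (M.factor x) = f x := by
  let H := (AddSubgroup.zmultiples β).topologicalClosure
  have horbit (n : ℤ) : f ((σ.toEquiv ^ n) x₀) = n • β := by
    rw [map_zpow_apply_eq_add_zsmul (σ := σ.toEquiv) hfσ, hf₀, zero_add]
  have hfH (x : X) : f x ∈ H := by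
    refine closure_mono ?_ (hf.range_subset_closure_image_dense hx₀ (mem_range_self x))
    rintro - ⟨-, ⟨n, rfl⟩, rfl⟩
    rw [horbit]
    exact AddSubgroup.zsmul_mem_zmultiples β n
  let fH : X → H := fun x => ⟨f x, hfH x⟩
  let βH : H := ⟨β, (AddSubgroup.zmultiples β).le_topologicalClosure (AddSubgroup.mem_zmultiples β)⟩
  have hdense : Dense (range fun n : ℤ => n • βH) := by
    rw [IsInducing.subtypeVal.dense_iff]
    have hval : Subtype.val '' (range fun n : ℤ => n • βH) = AddSubgroup.zmultiples β := by
      rw [← range_comp, AddSubgroup.coe_zmultiples]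
      rfl
    exact fun z => hval ▸ z.2
  have hfHc : Continuous fH := hf.subtype_mk _
  have hfHsurj : Surjective fH := by
    refine range_eq_univ.mp ?_
    rw [← (isCompact_range hfHc).isClosed.closure_eq]
    refine (hdense.mono ?_).closure_eq
    rintro - ⟨n, rfl⟩
    exact ⟨(σ.toEquiv ^ n) x₀, Subtype.ext (horbit n)⟩
  have : CompactSpace H :=
    isCompact_iff_compactSpace.mp (AddSubgroup.isClosed_topologicalClosure _).isCompact
  have := hfHc.secondCountableTopology_of_surjective hfHsurj
  exact ⟨⟨H, βH, hdense, fH, hfHc, hfHsurj, fun x => Subtype.ext (hfσ x)⟩, Subtype.ext hf₀,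
    Subtype.val, continuous_subtype_val, fun _ => rfl⟩

variable (σ) in
/-- `GroupRotationFactor X σ` lives in `Type 1`, but its kernels on `X` form a set in `Type`; a
product indexed by them (one chosen factor per kernel) stays in `Type`. -/
def kernels : Set (Setoid X) :=
  range fun F : GroupRotationFactor X σ => Setoid.ker F.factor

theorem exists_isMaximal (hx₀ : Dense (range fun n : ℤ => (σ.toEquiv ^ n) x₀)) :
    ∃ M : GroupRotationFactor X σ, M.factor x₀ = 0 ∧ M.IsMaximal := by
  let F : kernels σ → GroupRotationFactor X σ := fun s => s.2.choose
  have hF (s : kernels σ) : Setoid.ker (F s).factor = s := s.2.choose_spec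
  let Φ : X → ∀ s, (F s).Z := fun x s => (F s).factor x
  have hΦc : Continuous Φ := continuous_pi fun s => (F s).cont
  obtain ⟨M, hM₀, ι, hιc, hι⟩ := exists_factor_orbitClosure (f := fun x => Φ x - Φ x₀)
    (β := fun s => (F s).β) hx₀ (hΦc.sub continuous_const)
    (fun x => by ext s; simp only [Φ, Pi.sub_apply, Pi.add_apply, (F s).equivar]; abel)
    (sub_self _)
  refine ⟨M, hM₀, fun F' => ?_⟩
  let s : kernels σ := ⟨Setoid.ker F'.factor, F', rfl⟩
  let q : C(X, (F s).Z) := ⟨(F s).factor, (F s).cont⟩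
  have hq : IsQuotientMap q := .of_surjective_continuous (F s).surj (F s).cont
  let ψ₀ := hq.lift (⟨F'.factor, F'.cont⟩ : C(X, F'.Z)) fun a b hab => by
    show Setoid.ker F'.factor a b
    rw [← show Setoid.ker (F s).factor = Setoid.ker F'.factor from hF s]
    exact hab
  refine ⟨fun z => ψ₀ (ι z s + (F s).factor x₀),
    ψ₀.continuous.comp (((continuous_apply s).comp hιc).add continuous_const), fun x => ?_⟩
  simp only [hι, Φ, Pi.sub_apply, sub_add_cancel]
  exact DFunLike.congr_fun (hq.lift_comp _ _ : ψ₀.comp q = _) x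

end GroupRotationFactor

theorem AddMonoidHom.coe_ker_eq_image_preimage {X Z G : Type*} [AddGroup Z] [AddGroup G]
    (φ : Z →+ G) {p : X → Z} (hp : Surjective p) {q : X → G} {g : G}
    (h : ∀ x, φ (p x) = q x - g) : (φ.ker : Set Z) = p '' (q ⁻¹' {g}) := by
  ext z
  obtain ⟨x, rfl⟩ := hp z
  refine ⟨fun hx => ⟨x, ?_, rfl⟩, ?_⟩
  · rwa [SetLike.mem_coe, mem_ker, h, sub_eq_zero] at hx
  · rintro ⟨y, hy, hyx⟩
    rw [SetLike.mem_coe, mem_ker, ← hyx, h, mem_singleton_iff.mp hy, sub_self]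

theorem stmt_7_general {X : Type} [MetricSpace X] [CompactSpace X] (σ : X ≃ₜ X)
    (hmin : ∀ x : X, Dense (Set.range fun n : ℤ => (σ.toEquiv ^ n) x))
    {G : Type} [AddCommGroup G] [TopologicalSpace G] [IsTopologicalAddGroup G]
    [CompactSpace G] [T2Space G] [TopologicalSpace.MetrizableSpace G]
    (α : G) (hα : Dense (Set.range fun n : ℤ => n • α))
    (π : X → G) (hcont : Continuous π) (hsurj : Function.Surjective π)
    (hequi : ∀ x, π (σ x) = π x + α)
    (c : ℕ) (g : G)
    (hfin : (π ⁻¹' {g}).Finite) (hcard : Nat.card (π ⁻¹' {g}) = c) :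
    ∃ M : GroupRotationFactor X ⇑σ,
      (∀ F : GroupRotationFactor X ⇑σ,
        ∃ ψ : M.Z → F.Z, Continuous ψ ∧ ∀ x, ψ (M.factor x) = F.factor x) ∧
      ∃ φ : M.Z →+ G, Continuous φ ∧ Function.Surjective φ ∧
        (φ.ker : Set M.Z).Finite ∧ Nat.card φ.ker ≤ c := by
  obtain ⟨x₀, rfl⟩ := hsurj g
  obtain ⟨M, hM₀, hM⟩ := GroupRotationFactor.exists_isMaximal (hmin x₀)
  obtain ⟨ψ, hψc, hψ⟩ := hM ⟨G, α, hα, π, hcont, hsurj, hequi⟩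
  obtain ⟨φ, hφc, hφ⟩ := GroupRotationFactor.exists_addMonoidHom_eq_sub_of_comp_factor hψc hψ
  have hφπ (x : X) : φ (M.factor x) = π x - π x₀ := by rw [hφ, hψ, ← hM₀, hψ]
  have hker := φ.coe_ker_eq_image_preimage M.surj hφπ
  refine ⟨M, hM, φ, hφc, fun y => ?_, hker ▸ hfin.image _, ?_⟩
  · obtain ⟨x, hx⟩ := hsurj (y + π x₀)
    exact ⟨M.factor x, by rw [hφπ, hx, add_sub_cancel_right]⟩
  · rw [← hcard]
    exact (Nat.card_congr (Equiv.setCongr hker)).trans_le (Nat.card_image_le hfin)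

/-- If a minimal system `(X, σ)` is a somewhere finite-to-one
extension (with a fibre of cardinality `c`) of a minimal rotation on a compact
monothetic metrizable group `G`, then its maximal equicontinuous factor is a
group rotation on a group `Z` admitting a continuous surjective homomorphism
onto `G` with finite kernel of order at most `c`. -/
theorem stmt_7 {X : Type} [MetricSpace X] [CompactSpace X] (σ : X ≃ₜ X)
    (hmin : ∀ x : X, Dense (Set.range fun n : ℤ => (σ.toEquiv ^ n) x))
    {G : Type} [AddCommGroup G] [TopologicalSpace G] [IsTopologicalAddGroup G]
    [CompactSpace G] [T2Space G] [TopologicalSpace.MetrizableSpace G]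
    (α : G) (hα : Dense (Set.range fun n : ℤ => n • α))
    (π : X → G) (hcont : Continuous π) (hsurj : Function.Surjective π)
    (hequi : ∀ x, π (σ x) = π x + α)
    (c : ℕ) (hc : 0 < c) (g : G)
    (hfin : (π ⁻¹' {g}).Finite) (hcard : Nat.card (π ⁻¹' {g}) = c) :
    ∃ M : GroupRotationFactor X ⇑σ,
      (∀ F : GroupRotationFactor X ⇑σ,
        ∃ ψ : M.Z → F.Z, Continuous ψ ∧ ∀ x, ψ (M.factor x) = F.factor x) ∧
      ∃ φ : M.Z →+ G, Continuous φ ∧ Function.Surjective φ ∧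
        (φ.ker : Set M.Z).Finite ∧ Nat.card φ.ker ≤ c :=
  stmt_7_general σ hmin α hα π hcont hsurj hequi c g hfin hcard
end

section
/- Let u: ℤ → A be a bi-infinite sequence over a finite alphabet with |A| = d. If for some P ≥ 1 the number of distinct factors of u of length P is strictly less than P, then u is periodic. -/
/-!
Dropping the last letter and dropping the first letter both map the factors of length `n + 1`
onto the factors of length `n`. The complexity `n ↦ p(n)` is therefore nondecreasing, and since
`p(P) < P` it cannot increase strictly at every step: `p(n + 1) = p(n)` for some `n`. Then both
maps are injective on factors, so a factor of length `n` determines the letters on either side of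
it. Two equal factors at positions `a < b`, which exist by pigeonhole, hence stay equal under every
shift, and `b - a` is a period of `u`.
-/

namespace MorseHedlund

variable {A : Type*}

def factor (u : ℤ → A) (n : ℕ) (i : ℤ) : Fin n → A := fun j => u (i + (j : ℕ))

noncomputable def complexity (u : ℤ → A) (n : ℕ) : ℕ := (Set.range (factor u n)).ncard

variable (u : ℤ → A) (n : ℕ)

theorem init_factor (i : ℤ) : Fin.init (factor u (n + 1) i) = factor u n i := rfl

theorem tail_factor (i : ℤ) : Fin.tail (factor u (n + 1) i) = factor u n (i + 1) := by
  funext j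
  simp only [Fin.tail, factor, Fin.val_succ]
  congr 1
  push_cast
  ring

theorem image_init_range_factor :
    Fin.init '' Set.range (factor u (n + 1)) = Set.range (factor u n) := by
  rw [← Set.range_comp]
  rfl

theorem image_tail_range_factor :
    Fin.tail '' Set.range (factor u (n + 1)) = Set.range (factor u n) := by
  rw [← Set.range_comp]
  ext w
  constructor
  · rintro ⟨i, rfl⟩
    exact ⟨i + 1, (tail_factor u n i).symm⟩
  · rintro ⟨i, rfl⟩
    exact ⟨i - 1, by rw [Function.comp_apply, tail_factor, sub_add_cancel]⟩

variable [Finite A]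

theorem complexity_le_complexity_succ : complexity u n ≤ complexity u (n + 1) := by
  rw [complexity, ← image_init_range_factor]
  exact Set.ncard_image_le (Set.toFinite _)

theorem exists_complexity_succ_eq {P : ℕ} (hP : complexity u P < P) :
    ∃ n, complexity u (n + 1) = complexity u n := by
  by_contra! hne
  have hmono : StrictMono (complexity u) := strictMono_nat_of_lt_succ fun n =>
    (complexity_le_complexity_succ u n).lt_of_ne (hne n).symm
  exact (hmono.id_le P).not_gt hP

variable {u n}

theorem factor_succ_eq_of_factor_eq (hn : complexity u (n + 1) = complexity u n)
    {i j : ℤ} (h : factor u n i = factor u n j) :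
    factor u (n + 1) i = factor u (n + 1) j :=
  Set.injOn_of_ncard_image_eq (by rw [image_init_range_factor]; exact hn.symm) (Set.toFinite _)
    (Set.mem_range_self i) (Set.mem_range_self j) h

theorem factor_add_one_eq_of_factor_eq (hn : complexity u (n + 1) = complexity u n)
    {i j : ℤ} (h : factor u n i = factor u n j) :
    factor u n (i + 1) = factor u n (j + 1) := by
  rw [← tail_factor, ← tail_factor, factor_succ_eq_of_factor_eq hn h]

theorem factor_sub_one_eq_of_factor_eq (hn : complexity u (n + 1) = complexity u n)
    {i j : ℤ} (h : factor u n i = factor u n j) :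
    factor u n (i - 1) = factor u n (j - 1) := by
  have hsucc : factor u (n + 1) (i - 1) = factor u (n + 1) (j - 1) :=
    Set.injOn_of_ncard_image_eq (by rw [image_tail_range_factor]; exact hn.symm)
      (Set.toFinite _) (Set.mem_range_self _) (Set.mem_range_self _)
      (by rw [tail_factor, tail_factor, sub_add_cancel, sub_add_cancel, h])
  rw [← init_factor u n, ← init_factor u n, hsucc]

theorem factor_add_eq_of_factor_eq (hn : complexity u (n + 1) = complexity u n)
    {i j : ℤ} (h : factor u n i = factor u n j) (m : ℤ) :
    factor u n (i + m) = factor u n (j + m) := by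
  induction m using Int.induction_on with
  | zero => simpa using h
  | succ k ih =>
    simpa only [add_assoc] using factor_add_one_eq_of_factor_eq hn ih
  | pred k ih =>
    simpa only [add_sub_assoc'] using factor_sub_one_eq_of_factor_eq hn ih

theorem periodic_of_factor_eq (hn : complexity u (n + 1) = complexity u n)
    {a b : ℤ} (h : factor u n a = factor u n b) :
    Function.Periodic u (b - a) := by
  intro m
  have hshift := factor_succ_eq_of_factor_eq hn (factor_add_eq_of_factor_eq hn h (m - a))
  rw [add_sub_cancel, add_sub_left_comm, add_comm] at hshift
  simpa [factor] using congrFun hshift 0 |>.symm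

theorem exists_pos_period_of_complexity_succ_eq (hn : complexity u (n + 1) = complexity u n) :
    ∃ T : ℤ, 0 < T ∧ Function.Periodic u T := by
  obtain ⟨a, b, hab, h⟩ := Finite.exists_ne_map_eq_of_infinite (factor u n)
  rcases hab.lt_or_gt with hlt | hlt
  · exact ⟨b - a, sub_pos.mpr hlt, periodic_of_factor_eq hn h⟩
  · exact ⟨a - b, sub_pos.mpr hlt, periodic_of_factor_eq hn h.symm⟩

end MorseHedlund

open MorseHedlund in
theorem stmt_15_general {A : Type} [Fintype A]
    (u : ℤ → A) (P : ℕ)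
    (hcomp : (Set.range fun i : ℤ => fun j : Fin P => u (i + (j : ℕ))).ncard < P) :
    ∃ T : ℤ, 1 ≤ T ∧ ∀ n : ℤ, u (n + T) = u n := by
  obtain ⟨n, hn⟩ := exists_complexity_succ_eq u (P := P) hcomp
  exact exists_pos_period_of_complexity_succ_eq hn

/-- two-sided Morse–Hedlund: If a bi-infinite sequence over a
finite alphabet of cardinality `d` has fewer than `P` distinct factors of some
length `P ≥ 1`, then it is periodic. -/
theorem stmt_15 {A : Type} [Fintype A] (d : ℕ) (hd : Fintype.card A = d)
    (u : ℤ → A) (P : ℕ) (hP : 1 ≤ P)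
    (hcomp : (Set.range fun i : ℤ => fun j : Fin P => u (i + (j : ℕ))).ncard < P) :
    ∃ T : ℤ, 1 ≤ T ∧ ∀ n : ℤ, u (n + T) = u n :=
  stmt_15_general u P hcomp
end
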